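/- Assume ω > 0. Then ξ(μ) → +∞ as μ → 0⁺, and there exists μ̄ > 0 such that ξ is strictly monotone on (0, μ̄]. Consequently there exists a sequence (μ_n) with μ_n → 0 monotonically, ξ strictly monotone on (0, μ₁], and ξ(μ_n) ∈ 2πℤ for all n ∈ ℕ. -/

import Mathlib

open Set Filter Topology

/-- The function `ξ(μ) = (ω + γ(μ)μ) τ(μ) + (β(μ)/2) L² μ^{2ρ₂−1}`, where
`τ(μ) = μ⁻¹ log z̃(μ)` and `z̃(μ) = L μ^{ρ₂−ρ₁} − K₄`. -/
noncomputable def xiFn (ω K₄ L ρ₁ ρ₂ : ℝ) (γ β : ℝ → ℝ) (μ : ℝ) : ℝ :=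
  (ω + γ μ * μ) * (Real.log (L * μ ^ (ρ₂ - ρ₁) - K₄) / μ)
    + (β μ / 2) * L ^ 2 * μ ^ (2 * ρ₂ - 1)

set_option maxHeartbeats 8000000 in
/-- Assume `ω > 0`.  Then `ξ(μ) → +∞` as `μ → 0⁺`, `ξ` is strictly
monotone on some `(0, μ̄]`, and consequently there is a sequence `(μ_n)` decreasing
monotonically to `0` with `ξ` strictly monotone on `(0, μ_1]` and `ξ(μ_n) ∈ 2πℤ`
for all `n`. -/
theorem stmt_8
    (ω K₄ L ρ₁ ρ₂ : ℝ) (hω : 0 < ω) (hK₄ : 1 < K₄) (hL : 0 < L)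
    (hsum : ρ₁ + ρ₂ = 1) (hρ₁l : 1 / 2 < ρ₁) (hρ₁u : ρ₁ < 1)
    (γ β : ℝ → ℝ) (U : Set ℝ) (hU : U ∈ nhds (0 : ℝ))
    (hγ : ContDiffOn ℝ (⊤ : ℕ∞) γ U) (hβ : ContDiffOn ℝ (⊤ : ℕ∞) β U) :
    Tendsto (xiFn ω K₄ L ρ₁ ρ₂ γ β) (nhdsWithin 0 (Ioi 0)) atTop ∧
    (∃ μbar > (0 : ℝ),
      StrictMonoOn (xiFn ω K₄ L ρ₁ ρ₂ γ β) (Ioc 0 μbar) ∨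
      StrictAntiOn (xiFn ω K₄ L ρ₁ ρ₂ γ β) (Ioc 0 μbar)) ∧
    ∃ μseq : ℕ → ℝ, (∀ n, 0 < μseq n) ∧ StrictAnti μseq ∧
      Tendsto μseq atTop (nhds 0) ∧
      (StrictMonoOn (xiFn ω K₄ L ρ₁ ρ₂ γ β) (Ioc 0 (μseq 0)) ∨
       StrictAntiOn (xiFn ω K₄ L ρ₁ ρ₂ γ β) (Ioc 0 (μseq 0))) ∧
      ∀ n : ℕ, ∃ k : ℤ, xiFn ω K₄ L ρ₁ ρ₂ γ β (μseq n) = 2 * Real.pi * k := by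
  have hπ := Real.pi_pos
  have hρ₂pos : 0 < ρ₂ := by linarith
  have hρ₂lt : ρ₂ < 1 / 2 := by linarith
  have hcneg : ρ₂ - ρ₁ < 0 := by linarith
  -- Step 1: extract an open interval around 0 inside U, get derivatives and bounds
  obtain ⟨ε0, hε0pos, hε0U⟩ : ∃ ε > (0:ℝ), Ioo (-ε) ε ⊆ U := by
    obtain ⟨ε, hε, h⟩ := Metric.mem_nhds_iff.mp hU
    refine ⟨ε, hε, fun x hx => h ?_⟩
    rw [Real.ball_eq_Ioo]
    simpa using hx
  have hVo : IsOpen (Ioo (-ε0) ε0) := isOpen_Ioo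
  have hγV : ContDiffOn ℝ (⊤ : ℕ∞) γ (Ioo (-ε0) ε0) := hγ.mono hε0U
  have hβV : ContDiffOn ℝ (⊤ : ℕ∞) β (Ioo (-ε0) ε0) := hβ.mono hε0U
  have hdγ : ∀ x ∈ Ioo (-ε0) ε0, HasDerivAt γ (deriv γ x) x := fun x hx =>
    ((hγV.differentiableOn (by simp)).differentiableAt (hVo.mem_nhds hx)).hasDerivAt
  have hdβ : ∀ x ∈ Ioo (-ε0) ε0, HasDerivAt β (deriv β x) x := fun x hx =>
    ((hβV.differentiableOn (by simp)).differentiableAt (hVo.mem_nhds hx)).hasDerivAt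
  have hsub : Icc (0:ℝ) (ε0/2) ⊆ Ioo (-ε0) ε0 := fun x hx =>
    ⟨by linarith [hx.1], by linarith [hx.2]⟩
  obtain ⟨M₁, hM₁⟩ := isCompact_Icc.exists_bound_of_continuousOn (hγV.continuousOn.mono hsub)
  obtain ⟨M₂, hM₂⟩ := isCompact_Icc.exists_bound_of_continuousOn
    ((hγV.continuousOn_deriv_of_isOpen hVo (by simp)).mono hsub)
  obtain ⟨M₃, hM₃⟩ := isCompact_Icc.exists_bound_of_continuousOn (hβV.continuousOn.mono hsub)
  obtain ⟨M₄, hM₄⟩ := isCompact_Icc.exists_bound_of_continuousOn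
    ((hβV.continuousOn_deriv_of_isOpen hVo (by simp)).mono hsub)
  set M := max 1 (max (max M₁ M₂) (max M₃ M₄)) with hMdef
  have hM1 : (1:ℝ) ≤ M := le_max_left _ _
  have hM0 : (0:ℝ) < M := lt_of_lt_of_le one_pos hM1
  have hγb : ∀ x ∈ Icc (0:ℝ) (ε0/2), |γ x| ≤ M := fun x hx => by
    have h := hM₁ x hx; rw [Real.norm_eq_abs] at h
    exact h.trans (le_max_of_le_right (le_max_of_le_left (le_max_left _ _)))
  have hγ'b : ∀ x ∈ Icc (0:ℝ) (ε0/2), |deriv γ x| ≤ M := fun x hx => by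
    have h := hM₂ x hx; rw [Real.norm_eq_abs] at h
    exact h.trans (le_max_of_le_right (le_max_of_le_left (le_max_right _ _)))
  have hβb : ∀ x ∈ Icc (0:ℝ) (ε0/2), |β x| ≤ M := fun x hx => by
    have h := hM₃ x hx; rw [Real.norm_eq_abs] at h
    exact h.trans (le_max_of_le_right (le_max_of_le_right (le_max_left _ _)))
  have hβ'b : ∀ x ∈ Icc (0:ℝ) (ε0/2), |deriv β x| ≤ M := fun x hx => by
    have h := hM₄ x hx; rw [Real.norm_eq_abs] at h
    exact h.trans (le_max_of_le_right (le_max_of_le_right (le_max_right _ _)))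
  -- Step 2: limits
  have hzatTop : Tendsto (fun μ : ℝ => L * μ ^ (ρ₂ - ρ₁)) (𝓝[>] (0:ℝ)) atTop := by
    have h1 : Tendsto (fun μ : ℝ => μ ^ (-(ρ₂ - ρ₁))) (𝓝[>] (0:ℝ)) (𝓝[>] (0:ℝ)) := by
      rw [tendsto_nhdsWithin_iff]
      constructor
      · have hcont : ContinuousAt (fun x : ℝ => x ^ (-(ρ₂ - ρ₁))) 0 :=
          Real.continuousAt_rpow_const 0 _ (Or.inr (by linarith))
        have h := hcont.tendsto
        rw [Real.zero_rpow (by linarith : -(ρ₂ - ρ₁) ≠ 0)] at h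
        exact h.mono_left nhdsWithin_le_nhds
      · filter_upwards [eventually_mem_nhdsWithin] with x hx
        exact Real.rpow_pos_of_pos hx _
    have h2 : Tendsto (fun μ : ℝ => (μ ^ (-(ρ₂ - ρ₁)))⁻¹) (𝓝[>] (0:ℝ)) atTop :=
      h1.inv_tendsto_nhdsGT_zero
    have h3 : Tendsto (fun μ : ℝ => μ ^ (ρ₂ - ρ₁)) (𝓝[>] (0:ℝ)) atTop := by
      refine h2.congr' ?_
      filter_upwards [eventually_mem_nhdsWithin] with x hx
      rw [Real.rpow_neg (le_of_lt hx), inv_inv]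
    exact h3.const_mul_atTop hL
  have hlogTop : Tendsto (fun μ : ℝ => Real.log (L * μ ^ (ρ₂ - ρ₁) - K₄)) (𝓝[>] (0:ℝ)) atTop := by
    apply Real.tendsto_log_atTop.comp
    simpa [sub_eq_add_neg] using tendsto_atTop_add_const_right _ (-K₄) hzatTop
  have hpow0 : Tendsto (fun μ : ℝ => μ ^ (2 * ρ₂)) (𝓝[>] (0:ℝ)) (𝓝 0) := by
    have hcont : ContinuousAt (fun x : ℝ => x ^ (2 * ρ₂)) 0 :=
      Real.continuousAt_rpow_const 0 _ (Or.inr (by linarith))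
    have h := hcont.tendsto
    rw [Real.zero_rpow (by positivity : (2 * ρ₂ : ℝ) ≠ 0)] at h
    exact h.mono_left nhdsWithin_le_nhds
  -- Step 3: eventual conditions
  have hev : ∀ᶠ μ in 𝓝[>] (0:ℝ),
      (0 < μ ∧ μ < 1 ∧ μ ≤ ε0/2 ∧ μ ≤ ω/(8*M)) ∧
      K₄ + Real.exp 1 ≤ L * μ ^ (ρ₂ - ρ₁) ∧
      μ ^ (2*ρ₂) < ω/(4*M*L^2) ∧ μ ^ (2*ρ₂) ≤ ω/(2*M*L^2) := by
    have e1 : ∀ᶠ μ in 𝓝[>] (0:ℝ), 0 < μ := eventually_mem_nhdsWithin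
    have e2 : ∀ᶠ μ in 𝓝[>] (0:ℝ), μ < min 1 (min (ε0/2) (ω/(8*M))) :=
      (eventually_lt_nhds (by positivity)).filter_mono nhdsWithin_le_nhds
    have e3 := hzatTop.eventually_ge_atTop (K₄ + Real.exp 1)
    have e4 := hpow0.eventually (Iio_mem_nhds (show (0:ℝ) < ω/(4*M*L^2) by positivity))
    have e5 := hpow0.eventually (Iio_mem_nhds (show (0:ℝ) < ω/(2*M*L^2) by positivity))
    filter_upwards [e1, e2, e3, e4, e5] with μ h1 h2 h3 h4 h5
    refine ⟨⟨h1, lt_of_lt_of_le h2 (min_le_left _ _),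
      (lt_of_lt_of_le h2 ((min_le_right _ _).trans (min_le_left _ _))).le,
      (lt_of_lt_of_le h2 ((min_le_right _ _).trans (min_le_right _ _))).le⟩, h3, h4, le_of_lt h5⟩
  obtain ⟨δ', hδ'pos, hδ'⟩ := (nhdsGT_basis (0:ℝ)).eventually_iff.mp hev
  -- Step 4: the derivative is negative on (0, δ')
  have main : ∀ μ ∈ Ioo (0:ℝ) δ',
      ∃ d, HasDerivAt (xiFn ω K₄ L ρ₁ ρ₂ γ β) d μ ∧ d < 0 := by
    intro μ hμIoo
    obtain ⟨⟨h0, hμ1, hμε, hμω⟩, hzc, hp4, hp2⟩ := hδ' hμIoo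
    have hμIcc : μ ∈ Icc (0:ℝ) (ε0/2) := ⟨h0.le, hμε⟩
    have hμV : μ ∈ Ioo (-ε0) ε0 := hsub hμIcc
    have hzE : Real.exp 1 ≤ L * μ ^ (ρ₂ - ρ₁) - K₄ := by linarith
    have hzpos : 0 < L * μ ^ (ρ₂ - ρ₁) - K₄ := lt_of_lt_of_le (Real.exp_pos 1) hzE
    have hℓ1 : 1 ≤ Real.log (L * μ ^ (ρ₂ - ρ₁) - K₄) := (Real.le_log_iff_exp_le hzpos).mpr hzE
    have hq2 : (0:ℝ) < μ^2 := by positivity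
    have hX : (0:ℝ) < Real.log (L * μ ^ (ρ₂ - ρ₁) - K₄) / μ^2 := div_pos (by linarith) hq2
    -- the derivative
    have hdγμ : HasDerivAt γ (deriv γ μ) μ := hdγ μ hμV
    have hdβμ : HasDerivAt β (deriv β μ) μ := hdβ μ hμV
    have hA : HasDerivAt (fun x => ω + γ x * x) (deriv γ μ * μ + γ μ * 1) μ :=
      (hdγμ.mul (hasDerivAt_id' μ)).const_add ω
    have hzd : HasDerivAt (fun x : ℝ => L * x ^ (ρ₂ - ρ₁) - K₄)
        (L * ((ρ₂ - ρ₁) * μ ^ (ρ₂ - ρ₁ - 1))) μ :=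
      ((Real.hasDerivAt_rpow_const (Or.inl h0.ne')).const_mul L).sub_const K₄
    have hlogd : HasDerivAt (fun x : ℝ => Real.log (L * x ^ (ρ₂ - ρ₁) - K₄))
        (L * ((ρ₂ - ρ₁) * μ ^ (ρ₂ - ρ₁ - 1)) / (L * μ ^ (ρ₂ - ρ₁) - K₄)) μ :=
      hzd.log hzpos.ne'
    have hTd : HasDerivAt (fun x : ℝ => Real.log (L * x ^ (ρ₂ - ρ₁) - K₄) / x)
        ((L * ((ρ₂ - ρ₁) * μ ^ (ρ₂ - ρ₁ - 1)) / (L * μ ^ (ρ₂ - ρ₁) - K₄) * μ -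
          Real.log (L * μ ^ (ρ₂ - ρ₁) - K₄) * 1) / μ ^ 2) μ :=
      hlogd.div (hasDerivAt_id' μ) h0.ne'
    have hBd : HasDerivAt (fun x => β x / 2 * L ^ 2 * x ^ (2 * ρ₂ - 1))
        (deriv β μ / 2 * L ^ 2 * μ ^ (2 * ρ₂ - 1) +
          β μ / 2 * L ^ 2 * ((2 * ρ₂ - 1) * μ ^ (2 * ρ₂ - 1 - 1))) μ :=
      ((hdβμ.div_const 2).mul_const (L ^ 2)).mul
        (Real.hasDerivAt_rpow_const (Or.inl h0.ne'))
    refine ⟨_, by exact (hA.mul hTd).add hBd, ?_⟩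
    -- now show the derivative value is negative
    have habsγ := abs_le.mp (hγb μ hμIcc)
    have habsγ' := abs_le.mp (hγ'b μ hμIcc)
    have habsβ := abs_le.mp (hβb μ hμIcc)
    have habsβ' := abs_le.mp (hβ'b μ hμIcc)
    have hμω' : μ * (8*M) ≤ ω := (le_div_iff₀ (by positivity)).mp hμω
    have hAω : ω/2 ≤ ω + γ μ * μ := by nlinarith [habsγ.1]
    -- T1
    have hA'b : deriv γ μ * μ + γ μ * 1 ≤ 2*M := by nlinarith [habsγ'.1, habsγ'.2, habsγ.2]
    have hT1 : (deriv γ μ * μ + γ μ * 1) * (Real.log (L * μ ^ (ρ₂ - ρ₁) - K₄) / μ)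
        ≤ (ω/4) * (Real.log (L * μ ^ (ρ₂ - ρ₁) - K₄) / μ^2) := by
      have hstep1 : (deriv γ μ * μ + γ μ * 1) * (Real.log (L * μ ^ (ρ₂ - ρ₁) - K₄) / μ)
          ≤ 2*M * (Real.log (L * μ ^ (ρ₂ - ρ₁) - K₄) / μ) :=
        mul_le_mul_of_nonneg_right hA'b (div_nonneg (by linarith) h0.le)
      have hrw : Real.log (L * μ ^ (ρ₂ - ρ₁) - K₄) / μ
          = μ * (Real.log (L * μ ^ (ρ₂ - ρ₁) - K₄) / μ^2) := by
        field_simp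
      have hcoef : 2*M*μ ≤ ω/4 := by nlinarith
      have hstep2 : 2*M * (Real.log (L * μ ^ (ρ₂ - ρ₁) - K₄) / μ)
          ≤ (ω/4) * (Real.log (L * μ ^ (ρ₂ - ρ₁) - K₄) / μ^2) := by
        rw [hrw, ← mul_assoc]
        exact mul_le_mul_of_nonneg_right hcoef hX.le
      linarith
    -- T2
    have hz'neg : L * ((ρ₂ - ρ₁) * μ ^ (ρ₂ - ρ₁ - 1)) < 0 :=
      mul_neg_of_pos_of_neg hL (mul_neg_of_neg_of_pos hcneg (Real.rpow_pos_of_pos h0 _))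
    have hd0 : L * ((ρ₂ - ρ₁) * μ ^ (ρ₂ - ρ₁ - 1)) / (L * μ ^ (ρ₂ - ρ₁) - K₄) ≤ 0 :=
      div_nonpos_iff.mpr (Or.inr ⟨hz'neg.le, hzpos.le⟩)
    have hinner : L * ((ρ₂ - ρ₁) * μ ^ (ρ₂ - ρ₁ - 1)) / (L * μ ^ (ρ₂ - ρ₁) - K₄) * μ -
        Real.log (L * μ ^ (ρ₂ - ρ₁) - K₄) * 1 ≤ -Real.log (L * μ ^ (ρ₂ - ρ₁) - K₄) := by
      have h := mul_nonpos_iff.mpr (Or.inr ⟨hd0, h0.le⟩)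
      linarith
    have hfrac : (L * ((ρ₂ - ρ₁) * μ ^ (ρ₂ - ρ₁ - 1)) / (L * μ ^ (ρ₂ - ρ₁) - K₄) * μ -
        Real.log (L * μ ^ (ρ₂ - ρ₁) - K₄) * 1) / μ ^ 2
        ≤ -(Real.log (L * μ ^ (ρ₂ - ρ₁) - K₄) / μ^2) := by
      rw [← neg_div]
      exact (div_le_div_iff_of_pos_right hq2).mpr hinner
    have hfrac0 : (L * ((ρ₂ - ρ₁) * μ ^ (ρ₂ - ρ₁ - 1)) / (L * μ ^ (ρ₂ - ρ₁) - K₄) * μ -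
        Real.log (L * μ ^ (ρ₂ - ρ₁) - K₄) * 1) / μ ^ 2 ≤ 0 :=
      hfrac.trans (by linarith)
    have hT2 : (ω + γ μ * μ) *
        ((L * ((ρ₂ - ρ₁) * μ ^ (ρ₂ - ρ₁ - 1)) / (L * μ ^ (ρ₂ - ρ₁) - K₄) * μ -
          Real.log (L * μ ^ (ρ₂ - ρ₁) - K₄) * 1) / μ ^ 2)
        ≤ -((ω/2) * (Real.log (L * μ ^ (ρ₂ - ρ₁) - K₄) / μ^2)) := by
      calc (ω + γ μ * μ) *
          ((L * ((ρ₂ - ρ₁) * μ ^ (ρ₂ - ρ₁ - 1)) / (L * μ ^ (ρ₂ - ρ₁) - K₄) * μ -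
            Real.log (L * μ ^ (ρ₂ - ρ₁) - K₄) * 1) / μ ^ 2)
          ≤ (ω/2) * ((L * ((ρ₂ - ρ₁) * μ ^ (ρ₂ - ρ₁ - 1)) / (L * μ ^ (ρ₂ - ρ₁) - K₄) * μ -
            Real.log (L * μ ^ (ρ₂ - ρ₁) - K₄) * 1) / μ ^ 2) :=
            mul_le_mul_of_nonpos_right hAω hfrac0
        _ ≤ (ω/2) * (-(Real.log (L * μ ^ (ρ₂ - ρ₁) - K₄) / μ^2)) :=
            mul_le_mul_of_nonneg_left hfrac (by linarith)
        _ = -((ω/2) * (Real.log (L * μ ^ (ρ₂ - ρ₁) - K₄) / μ^2)) := by ring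
    -- T3
    have hmono : μ ^ (2*ρ₂-1) ≤ μ ^ (2*ρ₂-2) :=
      Real.rpow_le_rpow_of_exponent_ge h0 hμ1.le (by linarith)
    have hq : (0:ℝ) < μ ^ (2*ρ₂-2) := Real.rpow_pos_of_pos h0 _
    have ht31 : deriv β μ / 2 * L^2 * μ^(2*ρ₂-1) ≤ M/2*L^2*μ^(2*ρ₂-2) := by
      have h1 : deriv β μ / 2 * L^2 ≤ M/2*L^2 := by nlinarith [habsβ'.2, sq_nonneg L]
      calc deriv β μ / 2 * L^2 * μ^(2*ρ₂-1) ≤ M/2*L^2 * μ^(2*ρ₂-1) :=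
            mul_le_mul_of_nonneg_right h1 (Real.rpow_nonneg h0.le _)
        _ ≤ M/2*L^2*μ^(2*ρ₂-2) := mul_le_mul_of_nonneg_left hmono (by positivity)
    have ht32 : β μ / 2 * L^2 * ((2*ρ₂-1) * μ^(2*ρ₂-1-1)) ≤ M/2*L^2*μ^(2*ρ₂-2) := by
      rw [show (2*ρ₂-1-1 : ℝ) = 2*ρ₂-2 from by ring]
      have hs1 : 2*ρ₂ - 1 ≤ 0 := by linarith
      have hs2 : (-1:ℝ) ≤ 2*ρ₂ - 1 := by linarith
      have hkey0 : (0:ℝ) ≤ M - β μ * (2*ρ₂-1) := by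
        nlinarith [mul_nonneg (by linarith [habsβ.1] : (0:ℝ) ≤ M + β μ)
          (by linarith : (0:ℝ) ≤ -(2*ρ₂-1)), mul_nonneg hM0.le (by linarith : (0:ℝ) ≤ 1 + (2*ρ₂-1))]
      have hkey : (0:ℝ) ≤ (M - β μ * (2*ρ₂-1)) * L^2 * μ^(2*ρ₂-2) :=
        mul_nonneg (mul_nonneg hkey0 (sq_nonneg L)) hq.le
      nlinarith [hkey]
    have hT3 : M/2*L^2*μ^(2*ρ₂-2) + M/2*L^2*μ^(2*ρ₂-2)
        < (ω/4) * (Real.log (L * μ ^ (ρ₂ - ρ₁) - K₄) / μ^2) := by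
      have hrw : μ^(2*ρ₂-2) = μ^(2*ρ₂)/μ^2 := by
        rw [show (2*ρ₂-2:ℝ) = 2*ρ₂ - ((2:ℕ):ℝ) by push_cast; ring, Real.rpow_sub h0,
          Real.rpow_natCast]
      have h2' := (lt_div_iff₀ (by positivity : (0:ℝ) < 4*M*L^2)).mp hp4
      have h2 : M*L^2*μ^(2*ρ₂) < ω/4 := by linarith [h2']
      rw [hrw, show M/2*L^2*(μ^(2*ρ₂)/μ^2) + M/2*L^2*(μ^(2*ρ₂)/μ^2)
        = (M*L^2*μ^(2*ρ₂))/μ^2 from by ring]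
      calc (M*L^2*μ^(2*ρ₂))/μ^2 < (ω/4)/μ^2 := (div_lt_div_iff_of_pos_right hq2).mpr h2
        _ = (ω/4)*(1/μ^2) := by ring
        _ ≤ (ω/4) * (Real.log (L * μ ^ (ρ₂ - ρ₁) - K₄) / μ^2) :=
            mul_le_mul_of_nonneg_left ((div_le_div_iff_of_pos_right hq2).mpr hℓ1) (by linarith)
    linarith [hT1, hT2, ht31, ht32, hT3]
  -- Step 5: strict antitonicity on (0, δ'/2]
  set δ : ℝ := δ'/2 with hδdef
  have hδpos : 0 < δ := by positivity
  have hIocIoo : Ioc (0:ℝ) δ ⊆ Ioo 0 δ' := fun x hx => ⟨hx.1, by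
    have := hx.2; rw [hδdef] at this; linarith⟩
  have hcont : ContinuousOn (xiFn ω K₄ L ρ₁ ρ₂ γ β) (Ioc 0 δ) := fun x hx => by
    obtain ⟨d, hd, _⟩ := main x (hIocIoo hx)
    exact hd.continuousAt.continuousWithinAt
  have hderivneg : ∀ x ∈ interior (Ioc (0:ℝ) δ), deriv (xiFn ω K₄ L ρ₁ ρ₂ γ β) x < 0 := by
    rw [interior_Ioc]
    intro x hx
    obtain ⟨d, hd, hdneg⟩ := main x ⟨hx.1, by rw [hδdef] at hx; linarith [hx.2]⟩
    rwa [hd.deriv]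
  have hanti : StrictAntiOn (xiFn ω K₄ L ρ₁ ρ₂ γ β) (Ioc 0 δ) :=
    strictAntiOn_of_deriv_neg (convex_Ioc _ _) hcont hderivneg
  -- Step 6: ξ → +∞
  have hξtop : Tendsto (xiFn ω K₄ L ρ₁ ρ₂ γ β) (𝓝[>] (0:ℝ)) atTop := by
    refine tendsto_atTop_mono' _ ?_ (tendsto_inv_nhdsGT_zero.const_mul_atTop
      (show (0:ℝ) < ω/4 by positivity))
    filter_upwards [hev] with μ hP
    obtain ⟨⟨h0, hμ1, hμε, hμω⟩, hzc, hp4, hp2⟩ := hP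
    have hμIcc : μ ∈ Icc (0:ℝ) (ε0/2) := ⟨h0.le, hμε⟩
    have hzE : Real.exp 1 ≤ L * μ ^ (ρ₂ - ρ₁) - K₄ := by linarith
    have hzpos : 0 < L * μ ^ (ρ₂ - ρ₁) - K₄ := lt_of_lt_of_le (Real.exp_pos 1) hzE
    have hℓ1 : 1 ≤ Real.log (L * μ ^ (ρ₂ - ρ₁) - K₄) := (Real.le_log_iff_exp_le hzpos).mpr hzE
    have habsγ := abs_le.mp (hγb μ hμIcc)
    have habsβ := abs_le.mp (hβb μ hμIcc)
    have hμω' : μ * (8*M) ≤ ω := (le_div_iff₀ (by positivity)).mp hμω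
    have hAω : ω/2 ≤ ω + γ μ * μ := by nlinarith [habsγ.1]
    have hinv : (0:ℝ) < μ⁻¹ := by positivity
    have hT : (ω/2) * μ⁻¹ ≤ (ω + γ μ * μ) * (Real.log (L * μ ^ (ρ₂ - ρ₁) - K₄) / μ) := by
      have hℓμ : μ⁻¹ ≤ Real.log (L * μ ^ (ρ₂ - ρ₁) - K₄) / μ := by
        rw [div_eq_mul_inv]
        nlinarith
      exact mul_le_mul hAω hℓμ hinv.le (by linarith)
    have hBlow : -((ω/4) * μ⁻¹) ≤ β μ / 2 * L^2 * μ^(2*ρ₂-1) := by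
      have hrw : μ^(2*ρ₂-1) = μ^(2*ρ₂) * μ⁻¹ := by
        rw [show (2*ρ₂-1:ℝ) = 2*ρ₂ - 1 from rfl, Real.rpow_sub h0, Real.rpow_one,
          div_eq_mul_inv]
      have hqn : (0:ℝ) ≤ μ^(2*ρ₂) * μ⁻¹ := by positivity
      have h1 : -(M/2*L^2) ≤ β μ / 2 * L^2 := by nlinarith [habsβ.1, sq_nonneg L]
      have h2 : M/2*L^2 * μ^(2*ρ₂) ≤ ω/4 := by
        have := (le_div_iff₀ (by positivity : (0:ℝ) < 2*M*L^2)).mp hp2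
        nlinarith
      calc -((ω/4) * μ⁻¹) ≤ -(M/2*L^2 * μ^(2*ρ₂) * μ⁻¹) := by
            have := mul_le_mul_of_nonneg_right h2 hinv.le
            linarith
        _ = (-(M/2*L^2)) * (μ^(2*ρ₂) * μ⁻¹) := by ring
        _ ≤ (β μ / 2 * L^2) * (μ^(2*ρ₂) * μ⁻¹) := mul_le_mul_of_nonneg_right h1 hqn
        _ = β μ / 2 * L^2 * μ^(2*ρ₂-1) := by rw [hrw]
    simp only [xiFn]
    linarith [hT, hBlow]
  -- Step 7: construct the sequence
  set f := xiFn ω K₄ L ρ₁ ρ₂ γ β with hfdef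
  set k₀ : ℤ := ⌈f δ / (2*Real.pi)⌉ with hk₀
  have hv : ∀ n : ℕ, f δ ≤ 2*Real.pi*((k₀:ℝ) + n) := by
    intro n
    have h1 : f δ / (2*Real.pi) ≤ (k₀:ℝ) := Int.le_ceil _
    have h2 : f δ ≤ (k₀:ℝ) * (2*Real.pi) := (div_le_iff₀ (by positivity)).mp h1
    have h3 : (0:ℝ) ≤ 2*Real.pi*n := by positivity
    linarith
  have hex : ∀ n : ℕ, ∃ μ ∈ Ioc (0:ℝ) δ, f μ = 2*Real.pi*((k₀:ℝ) + n) := by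
    intro n
    have hev2 : ∀ᶠ μ in 𝓝[>] (0:ℝ), 2*Real.pi*((k₀:ℝ)+n) ≤ f μ :=
      hξtop.eventually_ge_atTop _
    have hev3 : ∀ᶠ μ in 𝓝[>] (0:ℝ), μ ∈ Ioo (0:ℝ) δ :=
      Ioo_mem_nhdsGT_of_mem ⟨le_refl 0, hδpos⟩
    obtain ⟨μ', hge, hμ'⟩ := (hev2.and hev3).exists
    have hsub2 : Icc μ' δ ⊆ Ioc 0 δ := fun x hx => ⟨lt_of_lt_of_le hμ'.1 hx.1, hx.2⟩
    have hIVT := intermediate_value_Icc' (le_of_lt hμ'.2) (hcont.mono hsub2)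
    have hmem : 2*Real.pi*((k₀:ℝ)+n) ∈ Icc (f δ) (f μ') := ⟨hv n, hge⟩
    obtain ⟨μ, hμmem, hμeq⟩ := hIVT hmem
    exact ⟨μ, hsub2 hμmem, hμeq⟩
  choose μs hμs hμseq using hex
  have hvmono : ∀ m n : ℕ, m < n → 2*Real.pi*((k₀:ℝ)+m) < 2*Real.pi*((k₀:ℝ)+n) := by
    intro m n hmn
    have hc : (m:ℝ) < n := by exact_mod_cast hmn
    nlinarith
  have hlt : ∀ m n : ℕ, m < n → μs n < μs m := by
    intro m n hmn
    by_contra hcon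
    push_neg at hcon
    have hle : f (μs n) ≤ f (μs m) := by
      rcases eq_or_lt_of_le hcon with heq | hlt'
      · rw [heq]
      · exact (hanti (hμs m) (hμs n) hlt').le
    rw [hμseq m, hμseq n] at hle
    exact absurd hle (not_le.mpr (hvmono m n hmn))
  refine ⟨hξtop, ⟨δ, hδpos, Or.inr hanti⟩, μs, fun n => (hμs n).1, hlt, ?_,
    Or.inr (hanti.mono (Ioc_subset_Ioc_right (hμs 0).2)), fun n => ⟨k₀ + n, by
      rw [hμseq n]; push_cast; ring⟩⟩
  -- tendsto 0
  rw [Metric.tendsto_atTop]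
  intro ε hε
  have hε' : 0 < min ε δ := lt_min hε hδpos
  have hε'mem : min ε δ ∈ Ioc (0:ℝ) δ := ⟨hε', min_le_right _ _⟩
  obtain ⟨N, hN⟩ := exists_nat_gt (f (min ε δ) / (2*Real.pi) - k₀)
  refine ⟨N, fun n hn => ?_⟩
  have hNn : (N:ℝ) ≤ n := by exact_mod_cast hn
  have h1 : f (min ε δ) < 2*Real.pi*((k₀:ℝ)+n) := by
    have h2 : f (min ε δ) / (2*Real.pi) < (k₀:ℝ) + n := by linarith
    have := (div_lt_iff₀ (show (0:ℝ) < 2*Real.pi by positivity)).mp h2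
    linarith
  have h2 : μs n < min ε δ := by
    by_contra hcon
    push_neg at hcon
    have hle : f (μs n) ≤ f (min ε δ) := by
      rcases eq_or_lt_of_le hcon with heq | hlt'
      · rw [← heq]
      · exact (hanti hε'mem (hμs n) hlt').le
    rw [hμseq n] at hle
    linarith
  rw [Real.dist_eq, sub_zero, abs_of_pos (hμs n).1]
  exact lt_of_lt_of_le h2 (min_le_left _ _)
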